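/- For negative behaviours G and H that are disjoint (their directories are disjoint sets of ramifications), the orthogonal of their intersection is the union of their orthogonals: (G ∩ H)^⊥ = G^⊥ ∪ H^⊥; consequently the incarnation of G ∩ H is in bijection with the cartesian product of the incarnations of G and H. -/

import Mathlib

/-! Designs of ludics, as (possibly infinitely branching) trees of alternating
positive actions `(+, ξ, I)` and negative actions `(-, ζ, J)`, with leaves
`Ω` (the partial design) and the daimon `✠`. Addresses (loci) are lists of
natural numbers (biases). -/

mutual
  inductive PosDesign : Type
    | omega : PosDesign
    | daimon : PosDesign
    | pos : List ℕ → Finset ℕ → (ℕ → NegDesign) → PosDesign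
  inductive NegDesign : Type
    | neg : (Finset ℕ → PosDesign) → NegDesign
end

def NegDesign.app : NegDesign → Finset ℕ → PosDesign
  | .neg f, J => f J

/-! The order `⊑` on designs, generated by `Ω ⊑ φ`, `φ ⊑ ✠`, congruence,
reflexivity and transitivity.  The two boolean parameters state whether the
axiom `Ω ⊑ φ` (resp. `φ ⊑ ✠`) is allowed: `LeP true true` is the observational
order `⊑`, `LeP false true` is `≤L`, and `LeP true false` is `≤R` (the stable
order). -/

mutual
  inductive LeP (o d : Bool) : PosDesign → PosDesign → Prop
    | omega (φ : PosDesign) (h : o = true) : LeP o d .omega φ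
    | daimon (φ : PosDesign) (h : d = true) : LeP o d φ .daimon
    | refl (φ : PosDesign) : LeP o d φ φ
    | trans {φ₁ φ₂ φ₃ : PosDesign} :
        LeP o d φ₁ φ₂ → LeP o d φ₂ φ₃ → LeP o d φ₁ φ₃
    | pos (ξ : List ℕ) (I : Finset ℕ) (k k' : ℕ → NegDesign)
        (h : ∀ i ∈ I, LeN o d (k i) (k' i)) : LeP o d (.pos ξ I k) (.pos ξ I k')
  inductive LeN (o d : Bool) : NegDesign → NegDesign → Prop
    | neg (f f' : Finset ℕ → PosDesign)
        (h : ∀ J, LeP o d (f J) (f' J)) : LeN o d (.neg f) (.neg f')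
end

/-! Normalization (the affine abstract machine) and orthogonality. -/

/-- The environment update in rule (R): the cut design at address `ξ` is
consumed, and its immediate subdesigns `k i` (for `i ∈ I`) are installed at the
addresses `ξ ⋆ i`. -/
def stepEnv (Ψ : List ℕ → Option NegDesign) (ξ : List ℕ) (I : Finset ℕ)
    (k : ℕ → NegDesign) : List ℕ → Option NegDesign :=
  fun ζ =>
    if ζ ≠ [] ∧ ζ.dropLast = ξ ∧ ζ.getLast! ∈ I then some (k ζ.getLast!)
    else if ζ = ξ then none else Ψ ζ

/-- `Conv φ Ψ` : the normalization of the net `⟨φ | Ψ⟩` converges, i.e. the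
weak reduction machine started on `φ` with environment `Ψ` reaches `✠`. -/
inductive Conv : PosDesign → (List ℕ → Option NegDesign) → Prop
  | dai (Ψ : List ℕ → Option NegDesign) : Conv .daimon Ψ
  | step (ξ : List ℕ) (I : Finset ℕ) (k : ℕ → NegDesign)
      (f : Finset ℕ → PosDesign) (Ψ : List ℕ → Option NegDesign)
      (h : Ψ ξ = some (.neg f)) :
      Conv (f I) (stepEnv Ψ ξ I k) → Conv (.pos ξ I k) Ψ

/-- Orthogonality of a positive design on the base `⊢ ε` and a negative design
on the base `ε ⊢`: normalization of the cut between them converges to `✠`. -/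
def orth (φ : PosDesign) (ψ : NegDesign) : Prop :=
  Conv φ (fun ζ => if ζ = [] then some ψ else none)

/-! Typing (well-formedness) of designs on a given base. -/

mutual
  /-- `WFP φ Λ` : `φ` is a design on the positive base `⊢ Λ`. -/
  inductive WFP : PosDesign → Finset (List ℕ) → Prop
    | omega (Λ : Finset (List ℕ)) : WFP .omega Λ
    | dai (Λ : Finset (List ℕ)) : WFP .daimon Λ
    | pos (ξ : List ℕ) (I : Finset ℕ) (k : ℕ → NegDesign)
        (Λ : Finset (List ℕ)) (Λi : ℕ → Finset (List ℕ))
        (hξ : ξ ∈ Λ)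
        (hsub : ∀ i ∈ I, Λi i ⊆ Λ.erase ξ)
        (hdisj : ∀ i ∈ I, ∀ j ∈ I, i ≠ j → Disjoint (Λi i) (Λi j))
        (hk : ∀ i ∈ I, WFN (k i) (ξ ++ [i]) (Λi i)) :
        WFP (.pos ξ I k) Λ
  /-- `WFN ψ ξ Λ` : `ψ` is a design on the negative base `ξ ⊢ Λ`. -/
  inductive WFN : NegDesign → List ℕ → Finset (List ℕ) → Prop
    | neg (f : Finset ℕ → PosDesign) (ξ : List ℕ) (Λ : Finset (List ℕ))
        (h : ∀ J : Finset ℕ, WFP (f J) (J.image (fun j => ξ ++ [j]) ∪ Λ)) :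
        WFN (.neg f) ξ Λ
end

/-! Behaviours, directories, incarnation. -/

/-- The orthogonal of a set of negative designs on the base `ε ⊢`. -/
def orthSetN (G : Set NegDesign) : Set PosDesign :=
  {φ | WFP φ {([] : List ℕ)} ∧ ∀ ψ ∈ G, orth φ ψ}

/-- The orthogonal of a set of positive designs on the base `⊢ ε`. -/
def orthSetP (A : Set PosDesign) : Set NegDesign :=
  {ψ | WFN ψ [] ∅ ∧ ∀ φ ∈ A, orth φ ψ}

/-- A negative behaviour on the base `ε ⊢`: a set of designs equal to its
bi-orthogonal. -/
def IsNegBehaviour (G : Set NegDesign) : Prop :=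
  (∀ ψ ∈ G, WFN ψ [] ∅) ∧ G = orthSetP (orthSetN G)

/-- `IsIncarnation G ψ ψ₀` : `ψ₀` is the incarnation `|ψ|_G` of `ψ` in `G`,
i.e. the smallest design of `G` contained in `ψ` for the stable order `≤R`. -/
def IsIncarnation (G : Set NegDesign) (ψ ψ₀ : NegDesign) : Prop :=
  ψ₀ ∈ G ∧ LeN true false ψ₀ ψ ∧ ∀ χ ∈ G, LeN true false χ ψ → LeN true false ψ₀ χ

/-- The set of incarnated designs of `G`. -/
def Incar (G : Set NegDesign) : Set NegDesign := {ψ | IsIncarnation G ψ ψ}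

/-- The directory of a negative behaviour: the set of ramifications `I` such
that `(-, ε, I)` occurs as an initial action of some incarnated design. -/
def Dir (G : Set NegDesign) : Set (Finset ℕ) :=
  {I | ∃ ψ ∈ Incar G, ψ.app I ≠ PosDesign.omega}

/-!
For a nonempty behaviour `K`, the designs of `K⊥` are `✠` and designs starting with
`(+, ε, I)` for `I` in a set `heads K`, which turns out to be `Dir K`. Whether `ψ ∈ K`
depends only on the components `ψ.app I` with `I ∈ heads K`, each tested separately against
the residual nets of `K⊥`. So when `heads G` and `heads H` are disjoint and `φ ∈ (G ∩ H)⊥`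
starts with `(+, ε, I)`, `I ∉ heads G`, any `ψ ∈ H` patched with `✠` on `heads G` still
lies in `G ∩ H` and looks like `ψ` to `φ`; hence `φ ∈ H⊥`. Incarnated designs are `Ω`
outside the heads and minimality is also tested componentwise, so restricting to `heads G` and to
`heads H` and gluing back are mutually inverse between `|G ∩ H|` and `|G| × |H|`.
-/

theorem LeP.eq_omega_or_eq {o : Bool} {φ φ' : PosDesign} (h : LeP o false φ φ')
    (hφ' : φ' = .omega ∨ φ' = .daimon) : φ = .omega ∨ φ = φ' := by
  refine @LeP.rec o false
    (motive_1 := fun a b _ => (b = .omega ∨ b = .daimon) → a = .omega ∨ a = b)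
    (motive_2 := fun _ _ _ => True) (fun _ _ _ => Or.inl rfl) (fun _ h => nomatch h)
    (fun _ _ => Or.inr rfl) ?_ (fun _ _ _ _ _ _ h => by rcases h with h | h <;> cases h)
    (fun _ _ _ _ => trivial) φ φ' h hφ'
  intro a b c _ _ ih₁ ih₂ hc
  rcases ih₂ hc with hb | rfl
  · subst hb
    exact Or.inl ((ih₁ (Or.inl rfl)).elim id id)
  · exact ih₁ hc

theorem leN_iff_forall_app {o d : Bool} {ψ χ : NegDesign} :
    LeN o d ψ χ ↔ ∀ J, LeP o d (ψ.app J) (χ.app J) := by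
  cases ψ; cases χ
  exact ⟨fun ⟨_, _, h⟩ => h, LeN.neg _ _⟩

theorem LeN.refl {o d : Bool} (ψ : NegDesign) : LeN o d ψ ψ :=
  leN_iff_forall_app.2 fun _ => LeP.refl _

theorem LeN.trans {o d : Bool} {ψ χ τ : NegDesign} (h₁ : LeN o d ψ χ)
    (h₂ : LeN o d χ τ) : LeN o d ψ τ :=
  leN_iff_forall_app.2 fun J => (leN_iff_forall_app.1 h₁ J).trans (leN_iff_forall_app.1 h₂ J)

theorem wfn_iff_forall_app {ψ : NegDesign} {ξ : List ℕ} {Λ : Finset (List ℕ)} :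
    WFN ψ ξ Λ ↔ ∀ J, WFP (ψ.app J) (J.image (fun j => ξ ++ [j]) ∪ Λ) := by
  cases ψ
  exact ⟨fun ⟨_, _, _, h⟩ => h, WFN.neg _ _ _⟩

theorem WFP.eq_nil_of_pos {ξ : List ℕ} {I : Finset ℕ} {k : ℕ → NegDesign}
    (h : WFP (.pos ξ I k) {[]}) : ξ = [] := by
  cases h
  exact Finset.mem_singleton.1 ‹_›

namespace NegDesign

@[ext]
theorem ext {ψ χ : NegDesign} (h : ∀ J, ψ.app J = χ.app J) : ψ = χ := by
  cases ψ; cases χ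
  exact congrArg neg (funext h)

def omega : NegDesign := neg fun _ => .omega

def daimon : NegDesign := neg fun _ => .daimon

open Classical in
noncomputable def piecewise (S : Set (Finset ℕ)) (ψ χ : NegDesign) : NegDesign :=
  neg (S.piecewise ψ.app χ.app)

noncomputable def restrict (S : Set (Finset ℕ)) (ψ : NegDesign) : NegDesign :=
  piecewise S ψ omega

variable {S T : Set (Finset ℕ)} {ψ χ τ : NegDesign} {J : Finset ℕ}

@[simp]
theorem app_omega : omega.app J = .omega := rfl

@[simp]
theorem app_daimon : daimon.app J = .daimon := rfl

open Classical in
@[simp]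
theorem app_piecewise_of_mem (h : J ∈ S) : (piecewise S ψ χ).app J = ψ.app J :=
  Set.piecewise_eq_of_mem _ _ _ h

open Classical in
@[simp]
theorem app_piecewise_of_notMem (h : J ∉ S) : (piecewise S ψ χ).app J = χ.app J :=
  Set.piecewise_eq_of_notMem _ _ _ h

@[simp]
theorem app_restrict_of_mem (h : J ∈ S) : (restrict S ψ).app J = ψ.app J :=
  app_piecewise_of_mem h

@[simp]
theorem app_restrict_of_notMem (h : J ∉ S) : (restrict S ψ).app J = .omega :=
  app_piecewise_of_notMem h

theorem restrict_piecewise_self : restrict S (piecewise S ψ χ) = restrict S ψ := by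
  ext J
  by_cases hS : J ∈ S <;> simp [hS]

theorem restrict_piecewise_of_disjoint (h : Disjoint S T) :
    restrict T (piecewise S ψ χ) = restrict T χ := by
  ext J
  by_cases hT : J ∈ T
  · simp [hT, h.notMem_of_mem_right hT]
  · simp [hT]

theorem piecewise_restrict_restrict :
    piecewise S (restrict S ψ) (restrict T ψ) = restrict (S ∪ T) ψ := by
  ext J
  by_cases hS : J ∈ S <;> by_cases hT : J ∈ T <;> simp [hS, hT]

theorem restrict_eq_self (h : ∀ J ∉ S, ψ.app J = .omega) : restrict S ψ = ψ := by
  ext J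
  by_cases hS : J ∈ S
  · simp [hS]
  · simp [hS, h J hS]

theorem wfn_omega {ξ : List ℕ} {Λ : Finset (List ℕ)} : WFN omega ξ Λ :=
  WFN.neg _ _ _ fun _ => WFP.omega _

theorem wfn_daimon {ξ : List ℕ} {Λ : Finset (List ℕ)} : WFN daimon ξ Λ :=
  WFN.neg _ _ _ fun _ => WFP.dai _

theorem _root_.WFN.piecewise {ξ : List ℕ} {Λ : Finset (List ℕ)} (hψ : WFN ψ ξ Λ)
    (hχ : WFN χ ξ Λ) :    WFN (piecewise S ψ χ) ξ Λ := by
  refine wfn_iff_forall_app.2 fun J => ?_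
  by_cases hS : J ∈ S
  · simpa [hS] using wfn_iff_forall_app.1 hψ J
  · simpa [hS] using wfn_iff_forall_app.1 hχ J

theorem _root_.WFN.restrict {ξ : List ℕ} {Λ : Finset (List ℕ)} (hψ : WFN ψ ξ Λ) :
    WFN (restrict S ψ) ξ Λ :=
  hψ.piecewise wfn_omega

theorem restrict_le {d : Bool} : LeN true d (restrict S ψ) ψ := by
  refine leN_iff_forall_app.2 fun J => ?_
  by_cases hS : J ∈ S
  · simpa [hS] using LeP.refl _
  · simpa [hS] using LeP.omega _ rfl

theorem _root_.LeN.restrict {o d : Bool} (h : LeN o d ψ χ) :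
    LeN o d (restrict S ψ) (restrict S χ) := by
  refine leN_iff_forall_app.2 fun J => ?_
  by_cases hS : J ∈ S
  · simpa [hS] using leN_iff_forall_app.1 h J
  · simpa [hS] using LeP.refl _

theorem piecewise_le {o d : Bool} (hψ : LeN o d ψ τ) (hχ : LeN o d χ τ) :
    LeN o d (piecewise S ψ χ) τ := by
  refine leN_iff_forall_app.2 fun J => ?_
  by_cases hS : J ∈ S
  · simpa [hS] using leN_iff_forall_app.1 hψ J
  · simpa [hS] using leN_iff_forall_app.1 hχ J

end NegDesign

open NegDesign

theorem not_orth_omega (ψ : NegDesign) : ¬ orth .omega ψ :=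
  nofun

theorem orth_daimon (ψ : NegDesign) : orth .daimon ψ :=
  Conv.dai _

/-- After the first step the residual environment no longer mentions `ψ`. -/
theorem orth_pos_nil_iff {I : Finset ℕ} {k : ℕ → NegDesign} {ψ : NegDesign} :
    orth (.pos [] I k) ψ ↔ Conv (ψ.app I) (stepEnv (fun _ => none) [] I k) := by
  have henv : stepEnv (fun ζ => if ζ = [] then some ψ else none) [] I k =
      stepEnv (fun _ => none) [] I k := by
    funext ζ
    unfold stepEnv
    split_ifs <;> simp_all
  cases ψ with
  | neg f =>
    rw [orth, ← henv]
    constructor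
    · rintro (_ | ⟨_, _, _, f', _, h, hc⟩)
      cases h
      exact hc
    · exact Conv.step [] I k f _ rfl

theorem orthSetN_antitone : Antitone orthSetN :=
  fun _ _ h _ hφ => ⟨hφ.1, fun ψ hψ => hφ.2 ψ (h hψ)⟩

theorem orthSetP_antitone : Antitone orthSetP :=
  fun _ _ h _ hψ => ⟨hψ.1, fun φ hφ => hψ.2 φ (h hφ)⟩

theorem incar_empty : Incar ∅ = ∅ :=
  Set.eq_empty_of_forall_notMem fun _ h => h.1

def heads (K : Set NegDesign) : Set (Finset ℕ) :=
  {I | ∃ k, PosDesign.pos [] I k ∈ orthSetN K}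

theorem app_ne_omega_of_mem_heads {K : Set NegDesign} {I : Finset ℕ} {ψ : NegDesign}
    (hI : I ∈ heads K) (hψ : ψ ∈ K) : ψ.app I ≠ .omega := by
  obtain ⟨k, -, h⟩ := hI
  intro hΩ
  have hconv := orth_pos_nil_iff.1 (h ψ hψ)
  rw [hΩ] at hconv
  cases hconv

namespace IsNegBehaviour

variable {K G H : Set NegDesign} {S : Set (Finset ℕ)} {ψ χ : NegDesign}

theorem inter (hG : IsNegBehaviour G) (hH : IsNegBehaviour H) : IsNegBehaviour (G ∩ H) := by
  refine ⟨fun ψ hψ => hG.1 ψ hψ.1, Set.Subset.antisymm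
    (fun ψ hψ => ⟨hG.1 ψ hψ.1, fun φ hφ => hφ.2 ψ hψ⟩) fun ψ hψ => ⟨?_, ?_⟩⟩
  · rw [hG.2]
    exact orthSetP_antitone (orthSetN_antitone Set.inter_subset_left) hψ
  · rw [hH.2]
    exact orthSetP_antitone (orthSetN_antitone Set.inter_subset_right) hψ

theorem mem_of_app_eq (hK : IsNegBehaviour K) (hψ : ψ ∈ K) (hχ : WFN χ [] ∅)
    (h : ∀ I ∈ heads K, χ.app I = ψ.app I) : χ ∈ K := by
  rw [hK.2] at hψ ⊢
  refine ⟨hχ, fun φ hφ => ?_⟩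
  have hφψ := hψ.2 φ hφ
  cases φ with
  | omega => exact absurd hφψ (not_orth_omega ψ)
  | daimon => exact orth_daimon χ
  | pos ξ I k =>
    obtain rfl := hφ.1.eq_nil_of_pos
    rw [orth_pos_nil_iff] at hφψ ⊢
    rwa [h I ⟨k, hφ⟩]

theorem daimon_mem (hK : IsNegBehaviour K) (hne : K.Nonempty) : daimon ∈ K := by
  obtain ⟨ψ, hψ⟩ := hne
  rw [hK.2] at hψ ⊢
  refine ⟨wfn_daimon, fun φ hφ => ?_⟩
  cases φ with
  | omega => exact absurd (hψ.2 _ hφ) (not_orth_omega ψ)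
  | daimon => exact orth_daimon _
  | pos ξ I k =>
    obtain rfl := hφ.1.eq_nil_of_pos
    exact orth_pos_nil_iff.2 (Conv.dai _)

theorem piecewise_heads_mem (hK : IsNegBehaviour K) (hψ : ψ ∈ K) (hχ : WFN χ [] ∅) :
    piecewise (heads K) ψ χ ∈ K :=
  hK.mem_of_app_eq hψ ((hK.1 ψ hψ).piecewise hχ) fun _ hI => app_piecewise_of_mem hI

theorem piecewise_mem_of_disjoint (hK : IsNegBehaviour K) (hS : Disjoint S (heads K))
    (hψ : WFN ψ [] ∅) (hχ : χ ∈ K) : piecewise S ψ χ ∈ K :=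
  hK.mem_of_app_eq hχ (hψ.piecewise (hK.1 χ hχ)) fun _ hI =>
    app_piecewise_of_notMem (hS.notMem_of_mem_right hI)

theorem restrict_heads_mem (hK : IsNegBehaviour K) (hψ : ψ ∈ K) : restrict (heads K) ψ ∈ K :=
  hK.piecewise_heads_mem hψ wfn_omega

theorem app_eq_omega_of_mem_incar (hK : IsNegBehaviour K) (hψ : ψ ∈ Incar K) {I : Finset ℕ}
    (hI : I ∉ heads K) : ψ.app I = .omega := by
  have hle := leN_iff_forall_app.1 (hψ.2.2 _ (hK.restrict_heads_mem hψ.1) restrict_le) I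
  rw [app_restrict_of_notMem hI] at hle
  exact (hle.eq_omega_or_eq (Or.inl rfl)).elim id id

theorem restrict_heads_eq_self_of_mem_incar (hK : IsNegBehaviour K) (hψ : ψ ∈ Incar K) :
    restrict (heads K) ψ = ψ :=
  restrict_eq_self fun _ hI => hK.app_eq_omega_of_mem_incar hψ hI

theorem restrict_heads_daimon_mem_incar (hK : IsNegBehaviour K) (hne : K.Nonempty) :
    restrict (heads K) daimon ∈ Incar K := by
  refine ⟨hK.restrict_heads_mem (hK.daimon_mem hne), LeN.refl _,
    fun ζ hζ hle => leN_iff_forall_app.2 fun I => ?_⟩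
  by_cases hI : I ∈ heads K
  · have hζI := leN_iff_forall_app.1 hle I
    simp only [app_restrict_of_mem hI, app_daimon] at hζI ⊢
    rcases hζI.eq_omega_or_eq (Or.inr rfl) with hΩ | h
    · exact absurd hΩ (app_ne_omega_of_mem_heads hI hζ)
    · exact h ▸ LeP.refl _
  · simpa [hI] using LeP.omega _ rfl

theorem dir_eq_heads (hK : IsNegBehaviour K) (hne : K.Nonempty) : Dir K = heads K := by
  refine Set.Subset.antisymm (fun I ⟨ψ, hψ, hI⟩ => ?_)
    fun I hI => ⟨_, hK.restrict_heads_daimon_mem_incar hne, ?_⟩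
  · by_contra h
    exact hI (hK.app_eq_omega_of_mem_incar hψ h)
  · simp [hI]

end IsNegBehaviour

section Disjoint

variable {G H : Set NegDesign}

theorem pos_mem_orthSetN_of_notMem_heads (hG : IsNegBehaviour G) (hH : IsNegBehaviour H)
    (hdisj : Disjoint (heads G) (heads H)) (hG₀ : G.Nonempty)
    {I : Finset ℕ} {k : ℕ → NegDesign} (hI : I ∉ heads G)
    (hφ : PosDesign.pos [] I k ∈ orthSetN (G ∩ H)) :
    PosDesign.pos [] I k ∈ orthSetN H := by
  refine ⟨hφ.1, fun ψ hψ => ?_⟩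
  have horth := hφ.2 _ ⟨hG.piecewise_heads_mem (hG.daimon_mem hG₀) (hH.1 ψ hψ),
    hH.piecewise_mem_of_disjoint hdisj wfn_daimon hψ⟩
  rw [orth_pos_nil_iff, app_piecewise_of_notMem hI] at horth
  exact orth_pos_nil_iff.2 horth

theorem orthSetN_inter_of_disjoint_heads (hG : IsNegBehaviour G) (hH : IsNegBehaviour H)
    (hG₀ : G.Nonempty) (hH₀ : H.Nonempty) (hdisj : Disjoint (heads G) (heads H)) :
    orthSetN (G ∩ H) = orthSetN G ∪ orthSetN H := by
  refine Set.Subset.antisymm (fun φ hφ => ?_) (Set.union_subset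
    (orthSetN_antitone Set.inter_subset_left) (orthSetN_antitone Set.inter_subset_right))
  cases φ with
  | omega =>
    exact absurd (hφ.2 _ ⟨hG.daimon_mem hG₀, hH.daimon_mem hH₀⟩) (not_orth_omega _)
  | daimon => exact Or.inl ⟨WFP.dai _, fun ψ _ => orth_daimon ψ⟩
  | pos ξ I k =>
    obtain rfl := hφ.1.eq_nil_of_pos
    by_cases hI : I ∈ heads G
    · refine Or.inl (pos_mem_orthSetN_of_notMem_heads hH hG hdisj.symm hH₀
        (hdisj.notMem_of_mem_left hI) ?_)
      rwa [Set.inter_comm]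
    · exact Or.inr (pos_mem_orthSetN_of_notMem_heads hG hH hdisj hG₀ hI hφ)

theorem heads_inter_of_disjoint_heads (hG : IsNegBehaviour G) (hH : IsNegBehaviour H)
    (hG₀ : G.Nonempty) (hH₀ : H.Nonempty) (hdisj : Disjoint (heads G) (heads H)) :
    heads (G ∩ H) = heads G ∪ heads H := by
  ext I
  simp only [heads, orthSetN_inter_of_disjoint_heads hG hH hG₀ hH₀ hdisj, Set.mem_ofPred_eq,
    Set.mem_union, exists_or]

theorem restrict_heads_mem_incar (hG : IsNegBehaviour G) (hH : IsNegBehaviour H)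
    (hdisj : Disjoint (heads G) (heads H)) {ψ : NegDesign} (hψ : ψ ∈ Incar (G ∩ H)) :
    restrict (heads G) ψ ∈ Incar G := by
  refine ⟨hG.restrict_heads_mem hψ.1.1, LeN.refl _, fun ζ hζ hle => ?_⟩
  have hτ : piecewise (heads G) ζ ψ ∈ G ∩ H :=
    ⟨hG.piecewise_heads_mem hζ (hH.1 ψ hψ.1.2),
      hH.piecewise_mem_of_disjoint hdisj (hG.1 ζ hζ) hψ.1.2⟩
  -- `ζ` patched with `ψ` off `heads G` lies in `G ∩ H` and below `ψ`, so minimality applies.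
  have hψτ := hψ.2.2 _ hτ (piecewise_le (hle.trans restrict_le) (LeN.refl _))
  have hrestr := hψτ.restrict (S := heads G)
  rw [restrict_piecewise_self] at hrestr
  exact hrestr.trans restrict_le

theorem piecewise_heads_mem_incar (hG : IsNegBehaviour G) (hH : IsNegBehaviour H)
    (hdisj : Disjoint (heads G) (heads H)) {χ χ' : NegDesign} (hχ : χ ∈ Incar G)
    (hχ' : χ' ∈ Incar H) : piecewise (heads G) χ χ' ∈ Incar (G ∩ H) := by
  refine ⟨⟨hG.piecewise_heads_mem hχ.1 (hH.1 χ' hχ'.1),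
    hH.piecewise_mem_of_disjoint hdisj (hG.1 χ hχ.1) hχ'.1⟩,
    LeN.refl _, fun τ hτ hle => ?_⟩
  have hG_le := hle.restrict (S := heads G)
  have hH_le := hle.restrict (S := heads H)
  rw [restrict_piecewise_self] at hG_le
  rw [restrict_piecewise_of_disjoint hdisj] at hH_le
  have hχτ := hχ.2.2 _ (hG.restrict_heads_mem hτ.1) (hG_le.trans restrict_le)
  have hχ'τ := hχ'.2.2 _ (hH.restrict_heads_mem hτ.2) (hH_le.trans restrict_le)
  exact piecewise_le (hχτ.trans restrict_le) (hχ'τ.trans restrict_le)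

noncomputable def incarInterEquiv (hG : IsNegBehaviour G) (hH : IsNegBehaviour H)
    (hG₀ : G.Nonempty) (hH₀ : H.Nonempty) (hdisj : Disjoint (heads G) (heads H)) :
    Incar (G ∩ H) ≃ Incar G × Incar H where
  toFun ψ := (⟨_, restrict_heads_mem_incar hG hH hdisj ψ.2⟩,
    ⟨_, restrict_heads_mem_incar hH hG hdisj.symm (by rw [Set.inter_comm]; exact ψ.2)⟩)
  invFun p := ⟨_, piecewise_heads_mem_incar hG hH hdisj p.1.2 p.2.2⟩
  left_inv ψ := Subtype.ext <| by
    dsimp only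
    rw [piecewise_restrict_restrict, ← heads_inter_of_disjoint_heads hG hH hG₀ hH₀ hdisj]
    exact (hG.inter hH).restrict_heads_eq_self_of_mem_incar ψ.2
  right_inv p := Prod.ext
    (Subtype.ext <| by
      dsimp only
      rw [restrict_piecewise_self, hG.restrict_heads_eq_self_of_mem_incar p.1.2])
    (Subtype.ext <| by
      dsimp only
      rw [restrict_piecewise_of_disjoint hdisj, hH.restrict_heads_eq_self_of_mem_incar p.2.2])

end Disjoint

/-- for disjoint negative behaviours `G` and `H` (disjoint
directories), the orthogonal of their intersection is the union of their
orthogonals, and the incarnation of `G ∩ H` is in bijection with the cartesian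
product of the incarnations of `G` and `H`. -/
theorem disjoint_behaviours_with (G H : Set NegDesign)
    (hG : IsNegBehaviour G) (hH : IsNegBehaviour H)
    (hdisj : Dir G ∩ Dir H = ∅) :
    orthSetN (G ∩ H) = orthSetN G ∪ orthSetN H ∧
      Nonempty (↥(Incar (G ∩ H)) ≃ ↥(Incar G) × ↥(Incar H)) := by
  rcases G.eq_empty_or_nonempty with rfl | hG₀
  · rw [Set.empty_inter, incar_empty,
      Set.union_eq_left.2 (orthSetN_antitone (Set.empty_subset H))]
    exact ⟨rfl, ⟨Equiv.equivOfIsEmpty _ _⟩⟩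
  rcases H.eq_empty_or_nonempty with rfl | hH₀
  · rw [Set.inter_empty, incar_empty,
      Set.union_eq_right.2 (orthSetN_antitone (Set.empty_subset G))]
    exact ⟨rfl, ⟨Equiv.equivOfIsEmpty _ _⟩⟩
  rw [hG.dir_eq_heads hG₀, hH.dir_eq_heads hH₀, ← Set.disjoint_iff_inter_eq_empty] at hdisj
  exact ⟨orthSetN_inter_of_disjoint_heads hG hH hG₀ hH₀ hdisj,
    ⟨incarInterEquiv hG hH hG₀ hH₀ hdisj⟩⟩
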